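/- arXiv:2401.06555 — 2 statements merged into one kernel-verified Lean document; each statement's English description precedes it below -/
import Mathlib

section
/- The only solutions in nonnegative integers (n, x, y) of the Diophantine equation L_n = 2^x · 3^y are (n, x, y) = (0, 1, 0), (1, 0, 0), (2, 0, 1), (3, 2, 0), and (6, 1, 2). -/
/-!
Eight never divides a Lucas number (modulo 8 the sequence has period 12), so `x ≤ 2`.
Binet's formula gives the triplication formula `L (3m) = L m ^ 3 - 3 (-1) ^ m L m`; since
`9 ∣ L n` forces `n = 3m` with `m ≡ 2 mod 4` and hence `3 ∣ L m`, it yields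
`v₃ (L n) = 1 + v₃ (L m)`, and so `3 ^ (y + 1) ∣ L n` implies `3 ^ y ∣ n`. Therefore
`L n ≤ 4 · 3n`, which fails for `n ≥ 10`; the remaining cases are checked directly.
-/

/-- The Lucas sequence: L 0 = 2, L 1 = 1, L (n+2) = L (n+1) + L n. -/
def lucas : ℕ → ℤ
  | 0 => 2
  | 1 => 1
  | n + 2 => lucas (n + 1) + lucas n

open Real goldenRatio

theorem lucas_add_two (n : ℕ) : lucas (n + 2) = lucas (n + 1) + lucas n := rfl

theorem lucas_eq_goldenRatio_pow_add_goldenConj_pow (n : ℕ) :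
    (lucas n : ℝ) = φ ^ n + ψ ^ n := by
  induction n using Nat.twoStepInduction with
  | zero => norm_num [lucas]
  | one => simp only [lucas, Int.cast_one, pow_one, goldenRatio_add_goldenConj]
  | more n ih ih' =>
    rw [lucas_add_two, Int.cast_add, ih, ih']
    linear_combination (-φ ^ n) * goldenRatio_sq - ψ ^ n * goldenConj_sq

theorem lucas_three_mul (m : ℕ) : lucas (3 * m) = lucas m ^ 3 - 3 * (-1) ^ m * lucas m := by
  apply Int.cast_injective (α := ℝ)
  push_cast
  have hprod : φ ^ m * ψ ^ m = (-1) ^ m := by rw [← mul_pow, goldenRatio_mul_goldenConj]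
  simp only [lucas_eq_goldenRatio_pow_add_goldenConj_pow, pow_mul']
  generalize φ ^ m = a, ψ ^ m = b at hprod ⊢
  linear_combination (-3 * (a + b)) * hprod

theorem lucas_emod_periodic {M : ℤ} {p : ℕ} (h₀ : lucas p ≡ lucas 0 [ZMOD M])
    (h₁ : lucas (p + 1) ≡ lucas 1 [ZMOD M]) : Function.Periodic (fun n ↦ lucas n % M) p := by
  intro n
  induction n using Nat.twoStepInduction with
  | zero => simpa [Int.ModEq] using h₀
  | one => simpa [Int.ModEq, add_comm] using h₁
  | more n ih ih' =>
    simp only [show n + 2 + p = n + p + 2 by omega, lucas_add_two]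
    exact Int.ModEq.add (by simpa [Int.ModEq, Nat.add_right_comm] using ih') ih

theorem lucas_emod_eq_lucas_mod_emod {M : ℤ} {p : ℕ} (h₀ : lucas p ≡ lucas 0 [ZMOD M])
    (h₁ : lucas (p + 1) ≡ lucas 1 [ZMOD M]) (n : ℕ) : lucas n % M = lucas (n % p) % M :=
  ((lucas_emod_periodic h₀ h₁).map_mod_nat n).symm

theorem not_eight_dvd_lucas (n : ℕ) : ¬ 8 ∣ lucas n := by
  have hres : ∀ r < 12, lucas r % 8 ≠ 0 := by decide
  rw [Int.dvd_iff_emod_eq_zero, lucas_emod_eq_lucas_mod_emod (p := 12) (by decide) (by decide)]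
  exact hres _ (n.mod_lt (by norm_num))

theorem three_dvd_lucas_of_mod_four_eq_two {n : ℕ} (hn : n % 4 = 2) : 3 ∣ lucas n := by
  have hres : ∀ r < 8, r % 4 = 2 → lucas r % 3 = 0 := by decide
  rw [Int.dvd_iff_emod_eq_zero, lucas_emod_eq_lucas_mod_emod (p := 8) (by decide) (by decide)]
  exact hres _ (n.mod_lt (by norm_num)) (by omega)

theorem mod_twelve_eq_six_of_nine_dvd_lucas {n : ℕ} (h : 9 ∣ lucas n) : n % 12 = 6 := by
  have hres : ∀ r < 24, lucas r % 9 = 0 → r % 12 = 6 := by decide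
  rw [Int.dvd_iff_emod_eq_zero,
    lucas_emod_eq_lucas_mod_emod (p := 24) (by decide) (by decide)] at h
  have := hres _ (n.mod_lt (by norm_num)) h
  omega

theorem three_pow_dvd_of_three_pow_succ_dvd_lucas {k n : ℕ}
    (h : (3 : ℤ) ^ (k + 1) ∣ lucas n) : 3 ^ k ∣ n := by
  induction k generalizing n with
  | zero => exact one_dvd n
  | succ k ih =>
    have hn : n % 12 = 6 :=
      mod_twelve_eq_six_of_nine_dvd_lucas ((pow_dvd_pow 3 (by omega : 2 ≤ k + 2)).trans h)
    obtain ⟨m, rfl⟩ : 3 ∣ n := by omega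
    obtain ⟨c, hc⟩ := three_dvd_lucas_of_mod_four_eq_two (n := m) (by omega)
    have hfactor : lucas (3 * m) = 3 * (lucas m * (3 * c ^ 2 - 1)) := by
      rw [lucas_three_mul, Even.neg_one_pow (by rw [Nat.even_iff]; omega), hc]
      ring
    rw [hfactor, pow_succ', mul_dvd_mul_iff_left three_ne_zero] at h
    have hcop : IsCoprime ((3 : ℤ) ^ (k + 1)) (3 * c ^ 2 - 1) :=
      IsCoprime.pow_left ⟨c ^ 2, -1, by ring⟩
    rw [pow_succ']
    exact mul_dvd_mul_left 3 (ih (hcop.dvd_of_dvd_mul_right h))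

theorem three_pow_le_of_dvd_lucas {y n : ℕ} (hn : n ≠ 0) (h : (3 : ℤ) ^ y ∣ lucas n) :
    (3 : ℤ) ^ y ≤ 3 * n := by
  cases y with
  | zero => rw [pow_zero]; omega
  | succ k =>
    have := Nat.le_of_dvd (Nat.pos_of_ne_zero hn) (three_pow_dvd_of_three_pow_succ_dvd_lucas h)
    rw [pow_succ']
    exact_mod_cast Nat.mul_le_mul_left 3 this

theorem twelve_mul_lt_lucas {n : ℕ} (hn : 10 ≤ n) : 12 * (n : ℤ) < lucas n := by
  suffices h : 12 * (n : ℤ) < lucas n ∧ 12 * ((n : ℤ) + 1) < lucas (n + 1) from h.1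
  induction n, hn using Nat.le_induction with
  | base => norm_num [lucas]
  | succ n _ ih =>
    refine ⟨mod_cast ih.2, ?_⟩
    rw [lucas_add_two]
    push_cast
    linarith [ih.1, ih.2]

theorem lucas_eq_two_pow_mul_three_pow (n x y : ℕ) :
    lucas n = 2 ^ x * 3 ^ y ↔
      (n, x, y) ∈ ({(0, 1, 0), (1, 0, 0), (2, 0, 1), (3, 2, 0), (6, 1, 2)} :
        Set (ℕ × ℕ × ℕ)) := by
  simp only [Set.mem_insert_iff, Set.mem_singleton_iff, Prod.mk.injEq]
  constructor
  · intro h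
    have hx : x ≤ 2 := by
      by_contra! hx
      exact not_eight_dvd_lucas n ((pow_dvd_pow (2 : ℤ) hx).trans ⟨3 ^ y, h⟩)
    have hn : n < 10 := by
      by_contra! hn
      have : lucas n ≤ 12 * n := calc
        lucas n = 2 ^ x * 3 ^ y := h
        _ ≤ 2 ^ 2 * (3 * n) := by
          gcongr
          · norm_num
          · exact three_pow_le_of_dvd_lucas (by omega) (Dvd.intro_left _ h.symm)
        _ = 12 * n := by ring
      exact (twelve_mul_lt_lucas hn).not_ge this
    have hy : y < 4 := by
      have h3y : 3 ^ y ≤ lucas n :=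
        h ▸ le_mul_of_one_le_left (by positivity) (one_le_pow₀ (by norm_num))
      have hsmall : lucas n < 3 ^ 4 := by interval_cases n <;> decide
      exact (pow_lt_pow_iff_right₀ (by norm_num : (1 : ℤ) < 3)).mp (h3y.trans_lt hsmall)
    revert h
    interval_cases n <;> interval_cases x <;> interval_cases y <;> decide
  · rintro (⟨rfl, rfl, rfl⟩ | ⟨rfl, rfl, rfl⟩ | ⟨rfl, rfl, rfl⟩ | ⟨rfl, rfl, rfl⟩ |
      ⟨rfl, rfl, rfl⟩) <;> rfl
end

section
/- Let t ≥ 1 be an integer and set τ(t) = (α^t − 1)/(β^t − 1) (note β^t ≠ 1 since 0 < |β| < 1). Then α and τ(t) are multiplicatively dependent — i.e., there exist integers (m, k) ≠ (0, 0) with α^m · τ(t)^k = 1 — if and only if t = 1, t = 3, or t is even. Moreover, τ(1) = −α^{−2}, τ(3) = −α^2, and τ(t) = −α^t for every even t ≥ 2. -/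
/-!
For even `t` we have `ψ ^ t = φ⁻¹ ^ t`, whence `τ(t) = -φ ^ t`; `τ(1)` and `τ(3)` are computed
directly. For odd `t` we have `ψ ^ t = -φ⁻¹ ^ t`, whence `τ(t) = -φ ^ t * ρ` with
`ρ = (φ ^ t - 1) / (φ ^ t + 1)`. A dependence `φ ^ m * τ ^ k = 1` with `k ≠ 0` makes `ρ ^ k` a
power of the unit `φ`, so `ρ` and `ρ⁻¹` are algebraic integers. But
`ρ⁻¹ - ρ = 4 / (φ ^ t - φ⁻¹ ^ t) = 4 / L_t` with `L_t = φ ^ t + ψ ^ t` the Lucas number, a rational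
number that is an algebraic integer, hence an integer; for odd `t ≥ 5` we have `L_t ≥ 11`, so it
lies strictly between `0` and `1`.
-/

open Real goldenRatio Polynomial

def MultiplicativelyDependent {G : Type*} [DivInvMonoid G] (x y : G) : Prop :=
  ∃ m k : ℤ, (m, k) ≠ (0, 0) ∧ x ^ m * y ^ k = 1

theorem MultiplicativelyDependent.of_eq_neg_zpow {K : Type*} [DivisionRing K] {x y : K}
    (hx : x ≠ 0) {n : ℤ} (h : y = -x ^ n) : MultiplicativelyDependent x y :=
  ⟨-(n * 2), 2, by simp, by
    rw [h, even_two.neg_zpow, ← zpow_mul, ← zpow_add₀ hx, neg_add_cancel, zpow_zero]⟩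

section Integrality

variable {R A : Type*} [CommRing R] [Field A] [Algebra R A]

theorem IsIntegral.zpow {x : A} (hx : IsIntegral R x) (hx' : IsIntegral R x⁻¹) (n : ℤ) :
    IsIntegral R (x ^ n) := by
  obtain ⟨j, rfl | rfl⟩ := Int.eq_nat_or_neg n
  · simpa using hx.pow j
  · simpa using hx'.pow j

theorem IsIntegral.of_zpow_eq_zpow {x u : A} (hu : IsIntegral R u) (hu' : IsIntegral R u⁻¹)
    {k n : ℤ} (hk : k ≠ 0) (h : x ^ k = u ^ n) : IsIntegral R x := by
  refine IsIntegral.of_pow (Int.natAbs_pos.mpr hk) ?_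
  rcases Int.natAbs_eq k with hk' | hk'
  · rw [← zpow_natCast, ← hk', h]
    exact hu.zpow hu' n
  · rw [← zpow_natCast, ← neg_neg (k.natAbs : ℤ), ← hk', zpow_neg, h, ← zpow_neg]
    exact hu.zpow hu' (-n)

end Integrality

theorem not_isIntegral_natCast_div_of_lt {K : Type*} [Field K] [LinearOrder K]
    [IsStrictOrderedRing K] {a b : ℕ} (ha : 0 < a) (hab : a < b) :
    ¬ IsIntegral ℤ ((a : K) / b) := by
  intro h
  obtain ⟨k, hk⟩ := h.exists_int_iff_exists_rat.1 ⟨a / b, by push_cast; rfl⟩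
  have hb : (0 : K) < b := by exact_mod_cast ha.trans hab
  have hk0 : (0 : K) < k := hk ▸ by positivity
  have hk1 : (k : K) < 1 := hk ▸ (div_lt_one hb).2 (by exact_mod_cast hab)
  have : 0 < k ∧ k < 1 := ⟨by exact_mod_cast hk0, by exact_mod_cast hk1⟩
  omega

namespace Real

theorem isIntegral_goldenRatio : IsIntegral ℤ φ :=
  ⟨X ^ 2 - X - 1, by monicity!, by simp [goldenRatio_sq]⟩

theorem goldenRatio_sub_one : φ - 1 = φ⁻¹ := by
  rw [inv_goldenRatio, ← one_sub_goldenConj, neg_sub]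

theorem isIntegral_inv_goldenRatio : IsIntegral ℤ φ⁻¹ :=
  goldenRatio_sub_one ▸ isIntegral_goldenRatio.sub isIntegral_one

theorem goldenConj_pow_of_even {n : ℕ} (h : Even n) : ψ ^ n = (φ ^ n)⁻¹ := by
  rw [← neg_neg ψ, ← inv_goldenRatio, h.neg_pow, inv_pow]

theorem goldenConj_pow_of_odd {n : ℕ} (h : Odd n) : ψ ^ n = -(φ ^ n)⁻¹ := by
  rw [← neg_neg ψ, ← inv_goldenRatio, h.neg_pow, inv_pow]

theorem goldenRatio_pow_add_goldenConj_pow (n : ℕ) :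
    φ ^ (n + 1) + ψ ^ (n + 1) = Nat.fib (n + 1) + 2 * Nat.fib n := by
  rw [← goldenRatio_mul_fib_succ_add_fib, ← goldenConj_mul_fib_succ_add_fib]
  linear_combination (Nat.fib (n + 1) : ℝ) * goldenRatio_add_goldenConj

end Real

noncomputable def goldenTau (t : ℕ) : ℝ := (φ ^ t - 1) / (ψ ^ t - 1)

theorem goldenTau_of_even {t : ℕ} (ht : t ≠ 0) (he : Even t) : goldenTau t = -φ ^ t := by
  have hA : 1 < φ ^ t := one_lt_pow₀ one_lt_goldenRatio ht
  rw [goldenTau, goldenConj_pow_of_even he, div_eq_iff]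
  · field_simp
    ring
  · exact sub_ne_zero.2 (inv_lt_one_of_one_lt₀ hA).ne

theorem goldenTau_of_odd {t : ℕ} (ho : Odd t) :
    goldenTau t = -(φ ^ t * ((φ ^ t - 1) / (φ ^ t + 1))) := by
  have hA : 0 < φ ^ t := pow_pos goldenRatio_pos t
  rw [goldenTau, goldenConj_pow_of_odd ho]
  generalize φ ^ t = A at hA ⊢
  have : -A⁻¹ - 1 ≠ 0 := by have := inv_pos.2 hA; linarith
  rw [div_eq_iff this]
  field_simp
  ring

theorem goldenTau_one : goldenTau 1 = -φ ^ (-2 : ℤ) := by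
  rw [goldenTau_of_odd odd_one, pow_one, goldenRatio_sub_one, ← goldenRatio_sq, zpow_neg,
    zpow_ofNat, mul_div_assoc', mul_inv_cancel₀ goldenRatio_ne_zero, one_div]

theorem goldenTau_three : goldenTau 3 = -φ ^ 2 := by
  have h₁ : φ ^ 3 - 1 = 2 * φ := by linear_combination (φ + 1) * goldenRatio_sq
  have h₂ : φ ^ 3 + 1 = 2 * φ ^ 2 := by linear_combination (φ - 1) * goldenRatio_sq
  rw [goldenTau_of_odd (by decide), h₁, h₂]
  have := goldenRatio_ne_zero
  field_simp

theorem multiplicativelyDependent_goldenTau {t : ℕ} (ht : 1 ≤ t) (h : t = 1 ∨ t = 3 ∨ Even t) :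
    MultiplicativelyDependent φ (goldenTau t) := by
  rcases h with rfl | rfl | he
  · exact .of_eq_neg_zpow goldenRatio_ne_zero goldenTau_one
  · exact .of_eq_neg_zpow (n := 2) goldenRatio_ne_zero goldenTau_three
  · exact .of_eq_neg_zpow (n := t) goldenRatio_ne_zero (goldenTau_of_even (by omega) he)

theorem not_multiplicativelyDependent_goldenTau {t : ℕ} (ht : 5 ≤ t) (ho : Odd t) :
    ¬ MultiplicativelyDependent φ (goldenTau t) := by
  rintro ⟨m, k, hmk, h⟩
  set A := φ ^ t
  have hA : 1 < A := one_lt_pow₀ one_lt_goldenRatio (by omega)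
  set ρ := (A - 1) / (A + 1) with hρ_def
  have hρ : 0 < ρ := div_pos (by linarith) (by linarith)
  have hρk : φ ^ (m + t * k) * ρ ^ k = 1 := by
    have := congrArg abs h
    rw [goldenTau_of_odd ho, abs_mul, abs_zpow, abs_zpow, abs_neg, abs_of_pos goldenRatio_pos,
      abs_of_pos (mul_pos (by positivity) hρ), abs_one, mul_zpow] at this
    rw [zpow_add₀ goldenRatio_ne_zero, zpow_mul, zpow_natCast, ← this]
    ring
  have hk : k ≠ 0 := by
    rintro rfl
    rw [mul_zero, add_zero, zpow_zero, mul_one,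
      zpow_eq_one_iff_right₀ goldenRatio_pos.le one_lt_goldenRatio.ne'] at hρk
    exact hmk (by rw [hρk])
  have hρ_int : IsIntegral ℤ ρ :=
    isIntegral_goldenRatio.of_zpow_eq_zpow isIntegral_inv_goldenRatio hk
      (by rw [zpow_neg, ← eq_inv_of_mul_eq_one_right hρk])
  have hρ_inv_int : IsIntegral ℤ ρ⁻¹ :=
    isIntegral_goldenRatio.of_zpow_eq_zpow isIntegral_inv_goldenRatio hk
      (by rw [inv_zpow, inv_eq_of_mul_eq_one_left hρk])
  obtain ⟨n, rfl⟩ : ∃ n, t = n + 1 := ⟨t - 1, by omega⟩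
  have hL : A - A⁻¹ = (Nat.fib (n + 1) + 2 * Nat.fib n : ℕ) := by
    push_cast
    rw [← goldenRatio_pow_add_goldenConj_pow, goldenConj_pow_of_odd ho, sub_eq_add_neg]
  have hρ_inv_sub : ρ⁻¹ - ρ = (4 : ℕ) / (Nat.fib (n + 1) + 2 * Nat.fib n : ℕ) := by
    rw [← hL, hρ_def]
    have : A - 1 ≠ 0 := by linarith
    have : A ^ 2 - 1 ≠ 0 := by nlinarith
    field_simp
    ring
  refine not_isIntegral_natCast_div_of_lt (by norm_num) ?_ (hρ_inv_sub ▸ hρ_inv_int.sub hρ_int)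
  have := (show 5 ≤ Nat.fib 5 by decide).trans (Nat.fib_mono ht)
  omega

theorem alpha_tau_multiplicatively_dependent_iff (t : ℕ) (ht : 1 ≤ t) :
    let α : ℝ := (1 + Real.sqrt 5) / 2
    let β : ℝ := (1 - Real.sqrt 5) / 2
    let τ : ℝ := (α ^ t - 1) / (β ^ t - 1)
    ((∃ m k : ℤ, (m, k) ≠ (0, 0) ∧ α ^ m * τ ^ k = 1) ↔
        (t = 1 ∨ t = 3 ∨ Even t)) ∧
    (t = 1 → τ = -α ^ (-2 : ℤ)) ∧
    (t = 3 → τ = -α ^ 2) ∧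
    (Even t → 2 ≤ t → τ = -α ^ t) := by
  show (MultiplicativelyDependent φ (goldenTau t) ↔ (t = 1 ∨ t = 3 ∨ Even t)) ∧
    (t = 1 → goldenTau t = -φ ^ (-2 : ℤ)) ∧ (t = 3 → goldenTau t = -φ ^ 2) ∧
    (Even t → 2 ≤ t → goldenTau t = -φ ^ t)
  refine ⟨⟨fun hdep => ?_, multiplicativelyDependent_goldenTau ht⟩,
    by rintro rfl; exact goldenTau_one, by rintro rfl; exact goldenTau_three,
    fun he _ => goldenTau_of_even (by omega) he⟩
  by_contra! ⟨h₁, h₃, heven⟩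
  have hodd := Nat.not_even_iff_odd.1 heven
  have ht5 : 5 ≤ t := by obtain ⟨j, rfl⟩ := hodd; omega
  exact not_multiplicativelyDependent_goldenTau ht5 hodd hdep
end
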